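/- Let (A, A*) be a Leonard pair on a (d+1)-dimensional K-vector space (d ≥ 1) and β, γ, γ*, ϱ, ϱ*, ω, η, η* scalars satisfying the Askey-Wilson relations. With θ_i the ordered eigenvalues of A, a*_i = tr(E_i A*), and θ_{−1}, θ_{d+1} defined by γ = θ_{i−1} − β·θ_i + θ_{i+1} at i = 0 and i = d, then η = a*_i·(θ_i − θ_{i−1})·(θ_i − θ_{i+1}) − γ*·θ_i² − ω·θ_i for all 0 ≤ i ≤ d, and ω = a*_i·(θ_i − θ_{i+1}) + a*_{i−1}·(θ_{i−1} − θ_{i−2}) − γ*·(θ_i + θ_{i−1}) for all 1 ≤ i ≤ d. -/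

import Mathlib

/-- A square matrix is irreducible tridiagonal: nonzero entries lie within
distance one of the diagonal, and all sub- and superdiagonal entries are nonzero. -/
def IsIrreducibleTridiagonal {K : Type*} [Field K] {n : ℕ}
    (M : Matrix (Fin n) (Fin n) K) : Prop :=
  (∀ i j : Fin n, ((i : ℕ) + 1 < j ∨ (j : ℕ) + 1 < i) → M i j = 0) ∧
  (∀ i j : Fin n, ((i : ℕ) + 1 = j ∨ (j : ℕ) + 1 = i) → M i j ≠ 0)

/-- The Askey-Wilson relations for the pair `(A, B)`. -/
def AskeyWilsonRelations {K V : Type*} [Field K] [AddCommGroup V] [Module K V]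
    (A B : Module.End K V) (β γ γs ϱ ϱs ω η ηs : K) : Prop :=
  (A ^ 2 * B - β • (A * B * A) + B * A ^ 2 - γ • (A * B + B * A) - ϱ • B =
    γs • A ^ 2 + ω • A + η • 1) ∧
  (B ^ 2 * A - β • (B * A * B) + A * B ^ 2 - γs • (B * A + A * B) - ϱs • A =
    γ • B ^ 2 + ω • B + ηs • 1)

/-!
In the basis `c` the map `A` is diagonal with entries `θ i`, and `B` has an irreducible
tridiagonal matrix `M` with `a*_i = M i i`. With `P(x, y) = x² - βxy + y² - γ(x + y) - ϱ`,
entry `(i, j)` of the first Askey-Wilson relation reads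
`M i j * P(θ i, θ j) = δ_ij (γ* θ_i² + ω θ_i + η)`. Off the diagonal this gives
`P(θ i, θ (i+1)) = 0`; the `θ i` are distinct because `A` is irreducible tridiagonal in the
basis `b`, so its eigenvectors are determined by their first `b`-coordinate, and the difference
of two consecutive equations factors as `(θ_{i-1} - θ_{i+1}) (θ_{i-1} - β θ_i + θ_{i+1} - γ)`.
This recurrence turns `P(θ i, θ i)` into `(θ_i - θ_{i-1}) (θ_i - θ_{i+1})`, and the diagonal
entries become the formula for `η`. The entry `(i-1, i)` of the second relation, divided by
`M (i-1) i ≠ 0`, gives `ω` after the same recurrence.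
-/

open Matrix

section Algebra

variable {K : Type*} [Field K]

def awPoly (β γ ϱ x y : K) : K :=
  x ^ 2 - β * x * y + y ^ 2 - γ * (x + y) - ϱ

variable {β γ ϱ : K}

lemma awPoly_comm (x y : K) : awPoly β γ ϱ x y = awPoly β γ ϱ y x := by
  unfold awPoly; ring

lemma sub_mul_add_eq_of_awPoly_eq_zero {x y z : K} (hxy : awPoly β γ ϱ x y = 0)
    (hyz : awPoly β γ ϱ y z = 0) (hxz : x ≠ z) : x - β * y + z = γ := by
  have h : (x - z) * (x - β * y + z - γ) = 0 := by
    unfold awPoly at hxy hyz; linear_combination hxy - hyz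
  linear_combination (mul_eq_zero.mp h).resolve_left (sub_ne_zero.mpr hxz)

lemma awPoly_self_eq_mul {x y z : K} (hrec : x - β * y + z = γ) (hyz : awPoly β γ ϱ y z = 0) :
    awPoly β γ ϱ y y = (y - x) * (y - z) := by
  unfold awPoly at hyz ⊢; linear_combination (y - z) * hrec + hyz

end Algebra

namespace IsIrreducibleTridiagonal

variable {K : Type*} [Field K]

lemma eq_zero_of_mulVec_eq_smul {n : ℕ} {N : Matrix (Fin (n + 1)) (Fin (n + 1)) K}
    (hN : IsIrreducibleTridiagonal N) {θ : K} {x : Fin (n + 1) → K} (hx : N *ᵥ x = θ • x)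
    (h0 : x 0 = 0) : x = 0 := by
  suffices h : ∀ m : ℕ, ∀ j : Fin (n + 1), (j : ℕ) ≤ m → x j = 0 from
    funext fun j => h j j le_rfl
  intro m
  induction m with
  | zero => intro j hj; rwa [show j = 0 from Fin.ext (Nat.le_zero.mp hj)]
  | succ m ih =>
    intro j hj
    rcases Nat.lt_or_eq_of_le hj with hj | hj
    · exact ih j (by omega)
    have hrow := congrFun hx ⟨m, by omega⟩
    rw [Pi.smul_apply, ih _ le_rfl, smul_zero, mulVec, dotProduct,
      Fintype.sum_eq_single j] at hrow
    · exact (mul_eq_zero.mp hrow).resolve_left (hN.2 _ _ (Or.inl hj.symm))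
    · intro k hk
      rcases lt_or_gt_of_ne (Fin.val_ne_of_ne hk) with hlt | hgt
      · rw [ih k (by omega), mul_zero]
      · rw [hN.1 _ _ (Or.inl (by simp; omega)), zero_mul]

lemma mul_diagonal_mul_apply_of_succ_eq {n : ℕ} {M : Matrix (Fin n) (Fin n) K}
    (hM : IsIrreducibleTridiagonal M) (x : Fin n → K) {p q : Fin n} (hpq : (q : ℕ) = p + 1) :
    (M * diagonal x * M) p q = M p p * x p * M p q + M p q * x q * M q q := by
  rw [mul_apply, Fintype.sum_eq_add p q (fun h => by simp [h] at hpq)]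
  · simp only [mul_diagonal]
  · rintro k ⟨hkp, hkq⟩
    rcases lt_or_gt_of_ne (Fin.val_ne_of_ne hkq) with hlt | hgt
    · rw [hM.1 k q (Or.inl (by omega)), mul_zero]
    · rw [mul_diagonal, hM.1 p k (Or.inl (by omega)), zero_mul, zero_mul]

end IsIrreducibleTridiagonal

section Eigenvalues

variable {K V : Type*} [Field K] [AddCommGroup V] [Module K V]

lemma eq_zero_of_apply_eq_smul_of_repr_zero {n : ℕ} (b : Module.Basis (Fin (n + 1)) K V)
    {A : Module.End K V} (hA : IsIrreducibleTridiagonal (LinearMap.toMatrix b b A)) {θ : K}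
    {v : V} (hv : A v = θ • v) (h0 : b.repr v 0 = 0) : v = 0 := by
  have hx : LinearMap.toMatrix b b A *ᵥ b.repr v = θ • ⇑(b.repr v) := by
    rw [LinearMap.toMatrix_mulVec_repr, hv, map_smul, Finsupp.coe_smul]
  have := hA.eq_zero_of_mulVec_eq_smul hx h0
  exact b.repr.map_eq_zero_iff.mp (Finsupp.coe_eq_zero.mp this)

lemma injective_of_apply_basis_eq_smul {ι : Type*} {A : Module.End K V} (φ : V →ₗ[K] K)
    (hφ : ∀ (μ : K) (v : V), A v = μ • v → φ v = 0 → v = 0) (c : Module.Basis ι K V)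
    {θ : ι → K} (hc : ∀ p, A (c p) = θ p • c p) : Function.Injective θ := by
  classical
  intro p q hθ
  by_contra hpq
  set w := φ (c q) • c p - φ (c p) • c q
  have hw : A w = θ p • w := by
    simp only [w, map_sub, map_smul, hc, hθ, smul_sub, smul_comm (θ q)]
  have hw0 : w = 0 := hφ _ w hw (by simp only [w, map_sub, map_smul, smul_eq_mul]; ring)
  have hcoord : φ (c q) = 0 := by
    simpa [w, Finsupp.single_apply, hpq, Ne.symm hpq] using congrArg (c.repr · p) hw0
  exact c.ne_zero q (hφ _ _ (hc q) hcoord)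

lemma apply_basis_eq_smul_of_toMatrix_eq_diagonal {ι : Type*} [Fintype ι] [DecidableEq ι]
    (c : Module.Basis ι K V) {A : Module.End K V} {θ : ι → K}
    (hA : LinearMap.toMatrix c c A = diagonal θ) (p : ι) : A (c p) = θ p • c p := by
  apply c.repr.injective
  ext i
  rw [← LinearMap.toMatrix_apply, hA, map_smul, c.repr_self, Finsupp.smul_apply,
    Finsupp.single_apply, diagonal_apply]
  split_ifs <;> simp_all

end Eigenvalues

namespace AskeyWilsonRelations

variable {K V : Type*} [Field K] [AddCommGroup V] [Module K V] {n : ℕ} {A B : Module.End K V}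
  {β γ γs ϱ ϱs ω η ηs : K} {θ : Fin n → K}

lemma toMatrix_apply_mul_awPoly (h : AskeyWilsonRelations A B β γ γs ϱ ϱs ω η ηs)
    (c : Module.Basis (Fin n) K V) (hA : LinearMap.toMatrix c c A = diagonal θ) (i j : Fin n) :
    LinearMap.toMatrix c c B i j * awPoly β γ ϱ (θ i) (θ j) =
      (γs * θ i ^ 2 + ω * θ i + η) * (1 : Matrix (Fin n) (Fin n) K) i j := by
  have hij := congrArg (fun f => LinearMap.toMatrix c c f i j) h.1
  simp only [pow_two, map_sub, map_add, map_smul, LinearMap.toMatrix_mul, LinearMap.toMatrix_one,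
    hA, diagonal_mul_diagonal, Matrix.sub_apply, Matrix.add_apply, Matrix.smul_apply, smul_eq_mul,
    diagonal_mul, mul_diagonal, diagonal_apply] at hij
  unfold awPoly
  rcases eq_or_ne i j with rfl | hne
  · simp only [if_true, one_apply_eq] at hij ⊢
    linear_combination hij
  · simp only [hne, if_false, one_apply_ne hne] at hij ⊢
    linear_combination hij

lemma awPoly_eq_zero_of_ne (h : AskeyWilsonRelations A B β γ γs ϱ ϱs ω η ηs)
    (c : Module.Basis (Fin n) K V) (hA : LinearMap.toMatrix c c A = diagonal θ) {i j : Fin n}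
    (hij : i ≠ j) (hB : LinearMap.toMatrix c c B i j ≠ 0) : awPoly β γ ϱ (θ i) (θ j) = 0 := by
  have := h.toMatrix_apply_mul_awPoly c hA i j
  rw [one_apply_ne hij, mul_zero] at this
  exact (mul_eq_zero.mp this).resolve_left hB

lemma toMatrix_apply_self_mul_awPoly (h : AskeyWilsonRelations A B β γ γs ϱ ϱs ω η ηs)
    (c : Module.Basis (Fin n) K V) (hA : LinearMap.toMatrix c c A = diagonal θ) (i : Fin n) :
    LinearMap.toMatrix c c B i i * awPoly β γ ϱ (θ i) (θ i) = γs * θ i ^ 2 + ω * θ i + η := by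
  simpa using h.toMatrix_apply_mul_awPoly c hA i i

lemma omega_eq (h : AskeyWilsonRelations A B β γ γs ϱ ϱs ω η ηs)
    (c : Module.Basis (Fin n) K V) (hA : LinearMap.toMatrix c c A = diagonal θ)
    (hB : IsIrreducibleTridiagonal (LinearMap.toMatrix c c B)) {p q : Fin n}
    (hpq : (q : ℕ) = p + 1) :
    ω = LinearMap.toMatrix c c B q q * (θ p + θ q - β * θ q - γ) +
      LinearMap.toMatrix c c B p p * (θ p + θ q - β * θ p - γ) - γs * (θ p + θ q) := by
  have hne : p ≠ q := fun h => by simp [h] at hpq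
  have hMM := hB.mul_diagonal_mul_apply_of_succ_eq (fun _ => 1) hpq
  rw [diagonal_one, Matrix.mul_one] at hMM
  have hpq' := congrArg (fun f => LinearMap.toMatrix c c f p q) h.2
  simp only [pow_two, map_sub, map_add, map_smul, LinearMap.toMatrix_mul, LinearMap.toMatrix_one,
    hA, Matrix.sub_apply, Matrix.add_apply, Matrix.smul_apply, smul_eq_mul, diagonal_mul,
    mul_diagonal, diagonal_apply_ne _ hne, one_apply_ne hne,
    hB.mul_diagonal_mul_apply_of_succ_eq θ hpq, hMM] at hpq'
  set M := LinearMap.toMatrix c c B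
  have hfac : (M q q * (θ p + θ q - β * θ q - γ) + M p p * (θ p + θ q - β * θ p - γ) -
      γs * (θ p + θ q) - ω) * M p q = 0 := by
    linear_combination hpq'
  linear_combination -(mul_eq_zero.mp hfac).resolve_right (hB.2 p q (Or.inl hpq.symm))

end AskeyWilsonRelations

lemma LinearMap.trace_toLin_single_one_mul {R M : Type*} [CommRing R] [AddCommGroup M]
    [Module R M] {ι : Type*} [Fintype ι] [DecidableEq ι] (c : Module.Basis ι R M) (i : ι)
    (B : Module.End R M) :
    LinearMap.trace R M (Matrix.toLin c c (Matrix.single i i 1) * B) =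
      LinearMap.toMatrix c c B i i := by
  rw [LinearMap.trace_eq_matrix_trace R c, LinearMap.toMatrix_mul, LinearMap.toMatrix_toLin,
    trace_single_mul, one_smul]

lemma Set.injOn_Icc_of_injective_fin {α : Type*} {d : ℕ} {Θ : ℤ → α}
    (h : Function.Injective fun p : Fin (d + 1) => Θ p) : Set.InjOn Θ (Set.Icc 0 d) := by
  rintro i ⟨hi0, hid⟩ j ⟨hj0, hjd⟩ hij
  lift i to ℕ using hi0
  lift j to ℕ using hj0
  have := @h ⟨i, by omega⟩ ⟨j, by omega⟩ hij
  simpa using congrArg Fin.val this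

section ThreeTermRecurrence

variable {K : Type*} [Field K] {β γ ϱ : K} {d : ℕ} {Θ : ℤ → K}

lemma sub_mul_add_eq_of_awPoly_succ_eq_zero (hinj : Set.InjOn Θ (Set.Icc 0 d))
    (hP : ∀ i : ℤ, 0 ≤ i → i < d → awPoly β γ ϱ (Θ i) (Θ (i + 1)) = 0)
    (hlow : Θ (-1) - β * Θ 0 + Θ 1 = γ)
    (hhigh : Θ ((d : ℤ) - 1) - β * Θ d + Θ ((d : ℤ) + 1) = γ)
    {i : ℤ} (h0 : 0 ≤ i) (hid : i ≤ d) : Θ (i - 1) - β * Θ i + Θ (i + 1) = γ := by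
  rcases h0.eq_or_lt with rfl | h0
  · simpa using hlow
  rcases hid.eq_or_lt with rfl | hid
  · exact hhigh
  refine sub_mul_add_eq_of_awPoly_eq_zero (by simpa using hP (i - 1) (by omega) (by omega))
    (hP i h0.le hid) fun h => ?_
  have := hinj ⟨by omega, by omega⟩ ⟨by omega, by omega⟩ h
  omega

lemma awPoly_self_eq_of_recurrence (hd : 1 ≤ d)
    (hP : ∀ i : ℤ, 0 ≤ i → i < d → awPoly β γ ϱ (Θ i) (Θ (i + 1)) = 0)
    (hrec : ∀ i : ℤ, 0 ≤ i → i ≤ d → Θ (i - 1) - β * Θ i + Θ (i + 1) = γ)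
    {i : ℤ} (h0 : 0 ≤ i) (hid : i ≤ d) :
    awPoly β γ ϱ (Θ i) (Θ i) = (Θ i - Θ (i - 1)) * (Θ i - Θ (i + 1)) := by
  rcases hid.lt_or_eq with hid | rfl
  · exact awPoly_self_eq_mul (hrec i h0 hid.le) (hP i h0 hid)
  have hlast : awPoly β γ ϱ (Θ d) (Θ (d - 1)) = 0 := by
    rw [awPoly_comm]; simpa using hP (d - 1) (by omega) (by omega)
  have := awPoly_self_eq_mul (x := Θ (d + 1)) (by linear_combination hrec d h0 le_rfl) hlast
  linear_combination this

end ThreeTermRecurrence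

theorem stmt_17 {K V : Type*} [Field K] [AddCommGroup V] [Module K V]
    (d : ℕ) (hd1 : 1 ≤ d) (A B : Module.End K V)
    (c : Module.Basis (Fin (d + 1)) K V)
    (hBtri : IsIrreducibleTridiagonal (LinearMap.toMatrix c c B))
    (hAdiag : (LinearMap.toMatrix c c A).IsDiag)
    (hLP : ∃ b : Module.Basis (Fin (d + 1)) K V,
      IsIrreducibleTridiagonal (LinearMap.toMatrix b b A) ∧
      (LinearMap.toMatrix b b B).IsDiag)
    (E : Fin (d + 1) → Module.End K V)
    (hE : ∀ i, E i = Matrix.toLin c c (Matrix.single i i 1))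
    (as : Fin (d + 1) → K)
    (has : ∀ i, as i = LinearMap.trace K V (E i * B))
    (β γ γs ϱ ϱs ω η ηs : K)
    (hrel : AskeyWilsonRelations A B β γ γs ϱ ϱs ω η ηs)
    (Θ : ℤ → K)
    (hΘ : ∀ i : ℕ, (h : i ≤ d) →
      Θ i = LinearMap.toMatrix c c A ⟨i, by omega⟩ ⟨i, by omega⟩)
    (hlow : Θ (-1) - β * Θ 0 + Θ 1 = γ)
    (hhigh : Θ ((d : ℤ) - 1) - β * Θ d + Θ ((d : ℤ) + 1) = γ) :
    (∀ i : ℕ, (h : i ≤ d) →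
      η = as ⟨i, by omega⟩ * (Θ i - Θ ((i : ℤ) - 1)) * (Θ i - Θ ((i : ℤ) + 1)) -
        γs * Θ i ^ 2 - ω * Θ i) ∧
    (∀ i : ℕ, (h1 : 1 ≤ i) → (h2 : i ≤ d) →
      ω = as ⟨i, by omega⟩ * (Θ i - Θ ((i : ℤ) + 1)) +
        as ⟨i - 1, by omega⟩ * (Θ ((i : ℤ) - 1) - Θ ((i : ℤ) - 2)) -
        γs * (Θ i + Θ ((i : ℤ) - 1))) := by
  obtain ⟨b, hAb, -⟩ := hLP
  set M := LinearMap.toMatrix c c B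
  have hA : LinearMap.toMatrix c c A = diagonal fun p : Fin (d + 1) => Θ p := by
    rw [← hAdiag.diagonal_diag]
    exact congrArg diagonal (funext fun p => (hΘ p (Nat.lt_succ_iff.mp p.isLt)).symm)
  have has' (p : Fin (d + 1)) : as p = M p p := by
    rw [has, hE, LinearMap.trace_toLin_single_one_mul]
  have hinj : Set.InjOn Θ (Set.Icc 0 d) := Set.injOn_Icc_of_injective_fin <|
    injective_of_apply_basis_eq_smul (b.coord 0)
      (fun _ _ hv h0 => eq_zero_of_apply_eq_smul_of_repr_zero b hAb hv h0) c
      (apply_basis_eq_smul_of_toMatrix_eq_diagonal c hA)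
  have hP (i : ℤ) (h0 : 0 ≤ i) (hid : i < d) : awPoly β γ ϱ (Θ i) (Θ (i + 1)) = 0 := by
    lift i to ℕ using h0
    exact_mod_cast hrel.awPoly_eq_zero_of_ne c hA (i := ⟨i, by omega⟩) (j := ⟨i + 1, by omega⟩)
      (by simp [Fin.ext_iff]) (hBtri.2 _ _ (Or.inl rfl))
  have hrec (i : ℤ) (h0 : 0 ≤ i) (hid : i ≤ d) : Θ (i - 1) - β * Θ i + Θ (i + 1) = γ :=
    sub_mul_add_eq_of_awPoly_succ_eq_zero hinj hP hlow hhigh h0 hid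
  refine ⟨fun i hi => ?_, fun i h1 h2 => ?_⟩
  · have hD := hrel.toMatrix_apply_self_mul_awPoly c hA ⟨i, by omega⟩
    dsimp only at hD
    rw [awPoly_self_eq_of_recurrence hd1 hP hrec (by omega) (by omega)] at hD
    rw [has']
    linear_combination -hD
  · have hW := hrel.omega_eq c hA hBtri (p := ⟨i - 1, by omega⟩) (q := ⟨i, by omega⟩)
      (by simp only; omega)
    have hprev := hrec (i - 1) (by omega) (by omega)
    rw [show (i : ℤ) - 1 - 1 = i - 2 by ring, sub_add_cancel] at hprev
    dsimp only at hW
    rw [show ((i - 1 : ℕ) : ℤ) = i - 1 by omega] at hW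
    rw [has', has']
    linear_combination hW + M ⟨i, by omega⟩ ⟨i, by omega⟩ * hrec i (by omega) (by omega) +
      M ⟨i - 1, by omega⟩ ⟨i - 1, by omega⟩ * hprev
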